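/- arXiv:1712.08467 — 3 statements merged into one kernel-verified Lean document; each statement's English description precedes it below -/
import Mathlib

section
/- Let T_1, ..., T_M be distinct positive reals, M ≥ 2, and r > 0 the unique positive root of ∑_k x^{-T_k} = 1. Then for every probability distribution Q = (Q_1, ..., Q_M) with all Q_k > 0, the time-scaled entropy satisfies H(Q)/(∑_k Q_k T_k) ≤ log₂ r, with equality if and only if Q_k = r^{-T_k} for all k. -/
/-!
Gibbs' inequality `∑ Q log (P / Q) ≤ 0`, applied to the weights `P k = r ^ (-T k)` (which sum
to `1` because `r` is the root), is exactly `H(Q) ≤ (∑ Q T) log₂ r`, and equality in Gibbs'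
inequality forces `Q = P`.
-/

open Real Finset

lemma mul_log_div_le_sub {p q : ℝ} (hp : 0 < p) (hq : 0 < q) : q * log (p / q) ≤ p - q := by
  calc q * log (p / q) ≤ q * (p / q - 1) :=
        mul_le_mul_of_nonneg_left (log_le_sub_one_of_pos (div_pos hp hq)) hq.le
    _ = p - q := by field_simp

lemma mul_log_div_lt_sub {p q : ℝ} (hp : 0 < p) (hq : 0 < q) (hpq : p ≠ q) :
    q * log (p / q) < p - q := by
  have hne : p / q ≠ 1 := fun h => hpq ((div_eq_one_iff_eq hq.ne').mp h)
  calc q * log (p / q) < q * (p / q - 1) :=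
        mul_lt_mul_of_pos_left (log_lt_sub_one_of_pos (div_pos hp hq) hne) hq
    _ = p - q := by field_simp

section Gibbs

variable {ι : Type*} {s : Finset ι} {p q : ι → ℝ}

theorem sum_mul_log_div_nonpos (hp : ∀ i ∈ s, 0 < p i) (hq : ∀ i ∈ s, 0 < q i)
    (hsum : ∑ i ∈ s, p i ≤ ∑ i ∈ s, q i) : ∑ i ∈ s, q i * log (p i / q i) ≤ 0 :=
  calc ∑ i ∈ s, q i * log (p i / q i) ≤ ∑ i ∈ s, (p i - q i) :=
        sum_le_sum fun i hi => mul_log_div_le_sub (hp i hi) (hq i hi)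
    _ ≤ 0 := by rw [sum_sub_distrib]; linarith

theorem sum_mul_log_div_eq_zero_iff (hp : ∀ i ∈ s, 0 < p i) (hq : ∀ i ∈ s, 0 < q i)
    (hsum : ∑ i ∈ s, p i ≤ ∑ i ∈ s, q i) :
    ∑ i ∈ s, q i * log (p i / q i) = 0 ↔ ∀ i ∈ s, q i = p i := by
  constructor
  · intro hzero i hi
    by_contra hne
    -- every term of `∑ (p - q)` dominates the matching term of the Gibbs sum, strictly at `i`
    have hlt : ∑ i ∈ s, q i * log (p i / q i) < ∑ i ∈ s, (p i - q i) :=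
      sum_lt_sum (fun j hj => mul_log_div_le_sub (hp j hj) (hq j hj))
        ⟨i, hi, mul_log_div_lt_sub (hp i hi) (hq i hi) (Ne.symm hne)⟩
    rw [sum_sub_distrib] at hlt
    linarith
  · intro hqp
    exact sum_eq_zero fun i hi => by rw [hqp i hi, div_self (hp i hi).ne', log_one, mul_zero]

end Gibbs

lemma entropy_sub_logb_mul_eq {ι : Type*} (s : Finset ι) (T Q : ι → ℝ) {r : ℝ} (hr : 0 < r)
    (hQ : ∀ i ∈ s, 0 < Q i) :
    (-∑ i ∈ s, Q i * logb 2 (Q i)) - logb 2 r * ∑ i ∈ s, Q i * T i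
      = (∑ i ∈ s, Q i * log (r ^ (-T i) / Q i)) / log 2 := by
  have hterm : ∀ i ∈ s, Q i * log (r ^ (-T i) / Q i)
      = -(Q i * log (Q i)) - log r * (Q i * T i) := by
    intro i hi
    rw [log_div (rpow_pos_of_pos hr _).ne' (hQ i hi).ne', log_rpow hr]
    ring
  rw [sum_congr rfl hterm, sum_sub_distrib, sum_neg_distrib, ← mul_sum]
  simp only [logb, mul_div_assoc', ← sum_div]
  ring

theorem stmt3_general (M : ℕ) (T : Fin M → ℝ)
    (hTpos : ∀ k, 0 < T k)
    (r : ℝ) (hr : 0 < r) (hroot : ∑ k, r ^ (-(T k)) = 1)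
    (Q : Fin M → ℝ) (hQpos : ∀ k, 0 < Q k) (hQsum : ∑ k, Q k = 1) :
    (-∑ k, Q k * Real.logb 2 (Q k)) / (∑ k, Q k * T k) ≤ Real.logb 2 r ∧
    ((-∑ k, Q k * Real.logb 2 (Q k)) / (∑ k, Q k * T k) = Real.logb 2 r ↔
      ∀ k, Q k = r ^ (-(T k))) := by
  have hS : 0 < ∑ k, Q k * T k :=
    sum_pos (fun k _ => mul_pos (hQpos k) (hTpos k))
      (nonempty_of_sum_ne_zero (hQsum ▸ one_ne_zero))
  have hP : ∀ k ∈ univ, 0 < r ^ (-(T k)) := fun k _ => rpow_pos_of_pos hr _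
  have hQ : ∀ k ∈ univ, 0 < Q k := fun k _ => hQpos k
  have hsum : ∑ k, r ^ (-(T k)) ≤ ∑ k, Q k := by rw [hroot, hQsum]
  have hident := entropy_sub_logb_mul_eq univ T Q hr hQ
  constructor
  · rw [div_le_iff₀ hS, ← sub_nonpos, hident]
    exact div_nonpos_of_nonpos_of_nonneg (sum_mul_log_div_nonpos hP hQ hsum)
      (log_nonneg one_le_two)
  · rw [div_eq_iff hS.ne', ← sub_eq_zero, hident, div_eq_zero_iff,
      or_iff_left (log_pos one_lt_two).ne', sum_mul_log_div_eq_zero_iff hP hQ hsum]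
    simp only [mem_univ, true_implies]

/-- For every probability distribution Q with positive entries,
H(Q)/(∑ Q_k T_k) ≤ log₂ r, with equality iff Q_k = r^{-T_k} for all k. -/
theorem stmt3 (M : ℕ) (hM : 2 ≤ M) (T : Fin M → ℝ)
    (hTpos : ∀ k, 0 < T k) (hTinj : Function.Injective T)
    (r : ℝ) (hr : 0 < r) (hroot : ∑ k, r ^ (-(T k)) = 1)
    (Q : Fin M → ℝ) (hQpos : ∀ k, 0 < Q k) (hQsum : ∑ k, Q k = 1) :
    (-∑ k, Q k * Real.logb 2 (Q k)) / (∑ k, Q k * T k) ≤ Real.logb 2 r ∧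
    ((-∑ k, Q k * Real.logb 2 (Q k)) / (∑ k, Q k * T k) = Real.logb 2 r ↔
      ∀ k, Q k = r ^ (-(T k))) :=
  stmt3_general M T hTpos r hr hroot Q hQpos hQsum
end

section
/- Fix distinct positive reals T_1, ..., T_M, M ≥ 2. For θ ∈ ℝ define g(θ) = θ/ln 2 + log₂(ξ(θ)) / (∑_k P_k(θ) T_k), where ξ(θ) = ∑_k exp(-θ T_k) and P_k(θ) = exp(-θ T_k)/ξ(θ). Then g'(θ) = 0 if and only if ξ(θ) = 1. -/
/-!
With `ξ, S, Q` the zeroth, first and second moments `∑ₖ exp(-θTₖ) Tₖⁿ`, the function is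
`g = (θ + log ξ · ξ / S) / ln 2`, and differentiating gives `g' = log ξ · (ξQ - S²) / (S² ln 2)`.
Here `ξQ - S²` is `ξ²` times the variance of `T` under the Gibbs distribution, which is positive
since `T` takes two distinct values; so `g'` vanishes exactly when `log ξ = 0`.
-/

open Real Finset

noncomputable def gibbsMoment {ι : Type*} [Fintype ι] (T : ι → ℝ) (n : ℕ) (t : ℝ) : ℝ :=
  ∑ k, exp (-t * T k) * T k ^ n

section GibbsMoment

variable {ι : Type*} [Fintype ι] (T : ι → ℝ)

lemma gibbsMoment_zero (t : ℝ) : gibbsMoment T 0 t = ∑ k, exp (-t * T k) := by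
  simp [gibbsMoment]

lemma hasDerivAt_gibbsMoment (n : ℕ) (θ : ℝ) :
    HasDerivAt (gibbsMoment T n) (-gibbsMoment T (n + 1) θ) θ := by
  have hterm (k : ι) : HasDerivAt (fun t => exp (-t * T k) * T k ^ n)
      (exp (-θ * T k) * (-1 * T k) * T k ^ n) θ :=
    ((hasDerivAt_id θ).neg.mul_const (T k)).exp.mul_const _
  refine (HasDerivAt.fun_sum (u := univ) fun k _ => hterm k).congr_deriv ?_
  simp only [gibbsMoment, ← sum_neg_distrib]
  exact sum_congr rfl fun k _ => by ring

lemma gibbsMoment_pos [Nonempty ι] (hT : ∀ k, 0 < T k) (n : ℕ) (t : ℝ) :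
    0 < gibbsMoment T n t :=
  sum_pos (fun k _ => mul_pos (exp_pos _) (pow_pos (hT k) n)) univ_nonempty

end GibbsMoment

lemma sq_sum_mul_lt_sum_mul_sum_mul_sq {ι : Type*} [Fintype ι] {w x : ι → ℝ}
    (hw : ∀ k, 0 < w k) {i j : ι} (hij : x i ≠ x j) :
    (∑ k, w k * x k) ^ 2 < (∑ k, w k) * ∑ k, w k * x k ^ 2 := by
  have lagrange : ∑ k, ∑ l, w k * w l * (x k - x l) ^ 2
      = (∑ k, w k * x k ^ 2) * (∑ k, w k) + (∑ k, w k) * (∑ k, w k * x k ^ 2)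
        - 2 * ((∑ k, w k * x k) * ∑ k, w k * x k) := by
    rw [sum_mul_sum, sum_mul_sum, sum_mul_sum, mul_sum, ← sum_add_distrib, ← sum_sub_distrib]
    refine sum_congr rfl fun k _ => ?_
    rw [mul_sum, ← sum_add_distrib, ← sum_sub_distrib]
    exact sum_congr rfl fun l _ => by ring
  have hpos : 0 < ∑ k, ∑ l, w k * w l * (x k - x l) ^ 2 := by
    have hnonneg (k l : ι) : 0 ≤ w k * w l * (x k - x l) ^ 2 := by
      have := hw k; have := hw l; positivity
    refine sum_pos' (fun k _ => sum_nonneg fun l _ => hnonneg k l) ⟨i, mem_univ _, ?_⟩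
    refine sum_pos' (fun l _ => hnonneg i l) ⟨j, mem_univ _, ?_⟩
    have := hw i; have := hw j; have := sub_ne_zero.mpr hij; positivity
  nlinarith

lemma hasDerivAt_log_mul_self_div {f s : ℝ → ℝ} {q θ : ℝ} (hf : HasDerivAt f (-s θ) θ)
    (hs : HasDerivAt s (-q) θ) (hfθ : 0 < f θ) (hsθ : s θ ≠ 0) :
    HasDerivAt (fun t => log (f t) * f t / s t)
      (log (f θ) * (f θ * q - s θ ^ 2) / s θ ^ 2 - 1) θ := by
  refine (((hf.log hfθ.ne').fun_mul hf).fun_div hs hsθ).congr_deriv ?_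
  field_simp
  ring

lemma gibbs_entropy_rate_eq {ι : Type*} [Fintype ι] (T : ι → ℝ) (t : ℝ) :
    t / log 2 + logb 2 (∑ k, exp (-t * T k)) /
        (∑ k, (exp (-t * T k) / (∑ j, exp (-t * T j))) * T k)
      = (t + log (gibbsMoment T 0 t) * gibbsMoment T 0 t / gibbsMoment T 1 t) / log 2 := by
  have hmean : ∑ k, (exp (-t * T k) / (∑ j, exp (-t * T j))) * T k
      = gibbsMoment T 1 t / gibbsMoment T 0 t := by
    simp [gibbsMoment, div_mul_eq_mul_div, ← sum_div]
  rw [hmean, gibbsMoment_zero, logb, div_div_eq_mul_div, add_div]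
  ring

/-- For g(θ) = θ/ln 2 + log₂(ξ(θ)) / (∑_k P_k(θ) T_k), with
ξ(θ) = ∑_k exp(-θ T_k) and P_k(θ) = exp(-θ T_k)/ξ(θ), the derivative of g at θ
vanishes iff ξ(θ) = 1. -/
theorem stmt5 (M : ℕ) (hM : 2 ≤ M) (T : Fin M → ℝ)
    (hTpos : ∀ k, 0 < T k) (hTinj : Function.Injective T)
    (g : ℝ → ℝ)
    (hg : ∀ t : ℝ, g t = t / Real.log 2 +
      Real.logb 2 (∑ k, Real.exp (-t * T k)) /
        (∑ k, (Real.exp (-t * T k) / (∑ j, Real.exp (-t * T j))) * T k))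
    (θ d : ℝ) (hd : HasDerivAt g d θ) :
    d = 0 ↔ (∑ k, Real.exp (-θ * T k)) = 1 := by
  have : Nontrivial (Fin M) := Fin.nontrivial_iff_two_le.mpr hM
  obtain ⟨i, j, hij⟩ := exists_pair_ne (Fin M)
  have hg' : g = fun t => (t + log (gibbsMoment T 0 t) * gibbsMoment T 0 t
      / gibbsMoment T 1 t) / log 2 := funext fun t => (hg t).trans (gibbs_entropy_rate_eq T t)
  set ξ := gibbsMoment T 0 θ
  set S := gibbsMoment T 1 θ
  set Q := gibbsMoment T 2 θ
  have hξ : 0 < ξ := gibbsMoment_pos T hTpos 0 θ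
  have hS : 0 < S := gibbsMoment_pos T hTpos 1 θ
  have hvar : S ^ 2 < ξ * Q := by
    simpa [ξ, S, Q, gibbsMoment, sq, mul_assoc] using
      sq_sum_mul_lt_sum_mul_sum_mul_sq (fun k => exp_pos (-θ * T k)) (hTinj.ne hij)
  have hderiv : HasDerivAt g ((1 + (log ξ * (ξ * Q - S ^ 2) / S ^ 2 - 1)) / log 2) θ := by
    rw [hg']
    exact ((hasDerivAt_id θ).add (hasDerivAt_log_mul_self_div (hasDerivAt_gibbsMoment T 0 θ)
      (hasDerivAt_gibbsMoment T 1 θ) hξ hS.ne')).div_const (log 2)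
  have hd_eq : d = log ξ * ((ξ * Q - S ^ 2) / (S ^ 2 * log 2)) := by
    rw [hd.unique hderiv]
    field_simp
    ring
  have hfactor : 0 < (ξ * Q - S ^ 2) / (S ^ 2 * log 2) := by
    have := log_pos one_lt_two
    have := sub_pos.mpr hvar
    positivity
  rw [hd_eq, mul_eq_zero, or_iff_left hfactor.ne', ← gibbsMoment_zero T θ]
  exact ⟨eq_one_of_pos_of_log_eq_zero hξ, fun h => by rw [show ξ = 1 from h, log_one]⟩
end

section
/- For the conditional density p(ψ|λ) = (2/σ²)·√(ψ/λ)·exp(-2(λ+ψ)/σ²)·I₁(4√(λψ)/σ²) with λ > 0, σ > 0, the conditional mean satisfies ∫₀^∞ ψ·p(ψ|λ) dψ ≥ λ·(1 - exp(-2λ/σ²)). -/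
open MeasureTheory Set
open scoped Nat


lemma exp_tsum' (x : ℝ) : Real.exp x = ∑' n : ℕ, x ^ n / n ! := by
  rw [Real.exp_eq_exp_ℝ, NormedSpace.exp_eq_tsum_div]

lemma shift_eq (x : ℝ) (n : ℕ) :
    ((n + 1 : ℕ) : ℝ) * x ^ (n + 1) / (n + 1)! = x * (x ^ n / n !) := by
  rw [Nat.factorial_succ, Nat.cast_mul, pow_succ]
  have h1 : ((n + 1 : ℕ) : ℝ) ≠ 0 := by positivity
  have h2 : ((n ! : ℕ) : ℝ) ≠ 0 := by positivity
  field_simp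

lemma summable_n_pow (x : ℝ) : Summable (fun n : ℕ => (n : ℝ) * x ^ n / n !) := by
  rw [← summable_nat_add_iff 1]
  have : (fun n : ℕ => ((n + 1 : ℕ) : ℝ) * x ^ (n + 1) / (n + 1)!) =
      fun n : ℕ => x * (x ^ n / n !) := funext fun n => shift_eq x n
  push_cast at this ⊢
  rw [this]
  exact (Real.summable_pow_div_factorial x).mul_left x

lemma tsum_n_pow (x : ℝ) : ∑' n : ℕ, (n : ℝ) * x ^ n / n ! = x * Real.exp x := by
  rw [Summable.tsum_eq_zero_add (summable_n_pow x)]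
  push_cast
  simp only [Nat.cast_zero, zero_mul, zero_div, zero_add]
  have : (fun n : ℕ => ((n : ℝ) + 1) * x ^ (n + 1) / (n + 1)!) =
      fun n : ℕ => x * (x ^ n / n !) := by
    funext n
    have := shift_eq x n
    push_cast at this
    exact this
  rw [this, tsum_mul_left, ← exp_tsum']


/-- Modified Bessel function of the first kind of order one, via its power series:
I₁(z) = ∑_{n≥0} (z/2)^{2n+1}/(n!(n+1)!). -/
noncomputable def besselI1 (z : ℝ) : ℝ :=
  ∑' n : ℕ, (z / 2) ^ (2 * n + 1) / ((n.factorial : ℝ) * ((n + 1).factorial : ℝ))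

/-- Gamma-type integral: ∫₀^∞ ψ^(n+2) e^(-bψ) dψ = (n+2)!/b^(n+3). -/
lemma gamma_int (b : ℝ) (hb : 0 < b) (n : ℕ) :
    ∫ ψ in Ioi (0 : ℝ), ψ ^ (n + 2) * Real.exp (-(b * ψ)) =
      ((n + 2)! : ℝ) / b ^ (n + 3) := by
  have h := Real.integral_rpow_mul_exp_neg_mul_Ioi (a := (n : ℝ) + 3) (by positivity) hb
  have hG : Real.Gamma ((n : ℝ) + 3) = ((n + 2)! : ℝ) := by
    rw [show ((n : ℝ) + 3) = ((n + 2 : ℕ) : ℝ) + 1 by push_cast; ring,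
      Real.Gamma_nat_eq_factorial]
  have hP : (1 / b) ^ ((n : ℝ) + 3) = 1 / b ^ (n + 3) := by
    rw [show ((n : ℝ) + 3) = ((n + 3 : ℕ) : ℝ) by push_cast; ring, Real.rpow_natCast,
      div_pow, one_pow]
  calc ∫ ψ in Ioi (0 : ℝ), ψ ^ (n + 2) * Real.exp (-(b * ψ))
      = ∫ t in Ioi (0 : ℝ), t ^ ((n : ℝ) + 3 - 1) * Real.exp (-(b * t)) := by
        refine setIntegral_congr_fun measurableSet_Ioi (fun t ht => ?_)
        rw [show ((n : ℝ) + 3 - 1) = ((n + 2 : ℕ) : ℝ) by push_cast; ring,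
          Real.rpow_natCast]
    _ = 1 / b ^ (n + 3) * ((n + 2)! : ℝ) := by rw [h, hG, hP]
    _ = ((n + 2)! : ℝ) / b ^ (n + 3) := by ring

lemma integrable_pow_exp (b : ℝ) (hb : 0 < b) (n : ℕ) :
    IntegrableOn (fun ψ : ℝ => ψ ^ (n + 2) * Real.exp (-(b * ψ))) (Ioi 0) := by
  have h := integrableOn_rpow_mul_exp_neg_mul_rpow (s := ((n : ℝ) + 2)) (p := 1)
    (by have : (0:ℝ) ≤ (n:ℝ) := Nat.cast_nonneg n; linarith) zero_lt_one hb
  refine h.congr_fun (fun x hx => ?_) measurableSet_Ioi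
  beta_reduce
  rw [Real.rpow_one, show ((n : ℝ) + 2) = ((n + 2 : ℕ) : ℝ) by push_cast; ring,
    Real.rpow_natCast, neg_mul]

/-- The first moment of the continuous part of the channel output
exceeds λ times the continuous-part mass:
∫₀^∞ ψ p(ψ|λ) dψ ≥ λ (1 - exp(-2λ/σ²)). -/
theorem stmt18 (lam σ : ℝ) (hlam : 0 < lam) (hσ : 0 < σ) :
    lam * (1 - Real.exp (-2 * lam / σ ^ 2)) ≤
      ∫ ψ in Ioi (0 : ℝ),
        ψ * ((2 / σ ^ 2) * Real.sqrt (ψ / lam) * Real.exp (-2 * (lam + ψ) / σ ^ 2) *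
          besselI1 (4 * Real.sqrt (lam * ψ) / σ ^ 2)) := by
  set b : ℝ := 2 / σ ^ 2 with hb_def
  have hb : 0 < b := by positivity
  set c : ℕ → ℝ := fun n =>
    Real.exp (-(b * lam)) * b ^ (2 * n + 2) * lam ^ n / ((n ! : ℝ) * ((n + 1)! : ℝ)) with hc_def
  set g : ℕ → ℝ → ℝ := fun n ψ => c n * (ψ ^ (n + 2) * Real.exp (-(b * ψ))) with hg_def
  set a : ℕ → ℝ := fun n =>
    Real.exp (-(b * lam)) * ((n : ℝ) + 2) * (b * lam) ^ n / (b * (n ! : ℝ)) with ha_def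
  have hcn : ∀ n, 0 ≤ c n := fun n => by positivity
  have han : ∀ n, 0 ≤ a n := fun n => by positivity
  -- pointwise expansion of the integrand as a series
  have hpt : ∀ ψ ∈ Ioi (0 : ℝ),
      ψ * ((2 / σ ^ 2) * Real.sqrt (ψ / lam) * Real.exp (-2 * (lam + ψ) / σ ^ 2) *
        besselI1 (4 * Real.sqrt (lam * ψ) / σ ^ 2)) = ∑' n : ℕ, g n ψ := by
    intro ψ hψ
    rw [mem_Ioi] at hψ
    rw [besselI1, show ψ * ((2 / σ ^ 2) * Real.sqrt (ψ / lam) *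
        Real.exp (-2 * (lam + ψ) / σ ^ 2) * (∑' n : ℕ,
          (4 * Real.sqrt (lam * ψ) / σ ^ 2 / 2) ^ (2 * n + 1) /
            ((n ! : ℝ) * ((n + 1)! : ℝ)))) =
      (ψ * ((2 / σ ^ 2) * Real.sqrt (ψ / lam) * Real.exp (-2 * (lam + ψ) / σ ^ 2))) *
        (∑' n : ℕ, (4 * Real.sqrt (lam * ψ) / σ ^ 2 / 2) ^ (2 * n + 1) /
          ((n ! : ℝ) * ((n + 1)! : ℝ))) by ring, ← tsum_mul_left]
    refine tsum_congr fun n => ?_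
    have hz : 4 * Real.sqrt (lam * ψ) / σ ^ 2 / 2 = b * Real.sqrt (lam * ψ) := by
      rw [hb_def]; ring
    have hsq : Real.sqrt (lam * ψ) ^ (2 * n + 1) =
        (lam * ψ) ^ n * Real.sqrt (lam * ψ) := by
      rw [pow_succ, pow_mul, Real.sq_sqrt (by positivity : (0:ℝ) ≤ lam * ψ)]
    have hmul : Real.sqrt (ψ / lam) * Real.sqrt (lam * ψ) = ψ := by
      rw [← Real.sqrt_mul (by positivity : (0:ℝ) ≤ ψ / lam),
        show ψ / lam * (lam * ψ) = ψ ^ 2 by field_simp, Real.sqrt_sq hψ.le]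
    have hexp : Real.exp (-2 * (lam + ψ) / σ ^ 2) =
        Real.exp (-(b * lam)) * Real.exp (-(b * ψ)) := by
      rw [← Real.exp_add]
      congr 1
      rw [hb_def]; field_simp; ring
    rw [hz, mul_pow, hsq, hexp]
    simp only [hg_def, hc_def]
    linear_combination (ψ * b ^ (2 * n + 2) * Real.exp (-(b * lam)) * Real.exp (-(b * ψ)) *
      lam ^ n * ψ ^ n / ((n ! : ℝ) * ((n + 1)! : ℝ))) * hmul
  -- each term is integrable with integral a n
  have hgint : ∀ n, IntegrableOn (g n) (Ioi 0) := fun n =>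
    ((integrable_pow_exp b hb n).const_mul (c n))
  have hint : ∀ n, ∫ ψ in Ioi (0 : ℝ), g n ψ = a n := by
    intro n
    simp only [hg_def, hc_def, ha_def]
    rw [integral_const_mul, gamma_int b hb n]
    have h2 : ((n + 2)! : ℝ) = ((n : ℝ) + 2) * ((n + 1)! : ℝ) := by
      rw [show n + 2 = (n + 1) + 1 by ring, Nat.factorial_succ]
      push_cast; ring
    rw [h2]
    have hfac1 : ((n ! : ℕ) : ℝ) ≠ 0 := by positivity
    have hfac2 : (((n + 1)! : ℕ) : ℝ) ≠ 0 := by positivity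
    have hbne : b ≠ 0 := ne_of_gt hb
    field_simp
    ring
  -- summability of a
  have ha_eq : a = fun n : ℕ => (Real.exp (-(b * lam)) / b) *
      ((n : ℝ) * (b * lam) ^ n / (n ! : ℝ) + 2 * ((b * lam) ^ n / (n ! : ℝ))) := by
    funext n
    rw [ha_def]
    have hfac1 : ((n ! : ℕ) : ℝ) ≠ 0 := by positivity
    field_simp
  have ha_sum : Summable a := by
    rw [ha_eq]
    exact ((summable_n_pow (b * lam)).add
      ((Real.summable_pow_div_factorial (b * lam)).mul_left 2)).mul_left _
  have ha_tsum : ∑' n, a n = lam + 2 / b := by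
    rw [ha_eq, tsum_mul_left,
      Summable.tsum_add (summable_n_pow (b * lam))
        ((Real.summable_pow_div_factorial (b * lam)).mul_left 2),
      tsum_n_pow, tsum_mul_left, ← exp_tsum']
    rw [show Real.exp (-(b * lam)) / b * (b * lam * Real.exp (b * lam) +
        2 * Real.exp (b * lam)) = (Real.exp (-(b * lam)) * Real.exp (b * lam)) *
        (b * lam + 2) / b by ring, ← Real.exp_add, neg_add_cancel, Real.exp_zero]
    field_simp
  -- swap integral and sum
  have hswap : ∫ ψ in Ioi (0 : ℝ), ∑' n : ℕ, g n ψ = ∑' n, a n := by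
    rw [integral_tsum (fun n => (hgint n).aestronglyMeasurable) ?_]
    · exact tsum_congr hint
    · have hnorm : ∀ n, ∫⁻ ψ in Ioi (0 : ℝ), ‖g n ψ‖ₑ = ENNReal.ofReal (a n) := by
        intro n
        rw [← ofReal_integral_norm_eq_lintegral_enorm (hgint n)]
        congr 1
        rw [← hint n]
        refine setIntegral_congr_fun measurableSet_Ioi fun ψ hψ => ?_
        rw [mem_Ioi] at hψ
        exact Real.norm_of_nonneg (by simp only [hg_def]; positivity)
      simp_rw [hnorm]
      rw [← ENNReal.ofReal_tsum_of_nonneg han ha_sum]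
      exact ENNReal.ofReal_ne_top
  rw [setIntegral_congr_fun measurableSet_Ioi hpt, hswap, ha_tsum]
  have h1 : -2 * lam / σ ^ 2 = -(b * lam) := by rw [hb_def]; ring
  rw [h1]
  nlinarith [Real.exp_pos (-(b * lam)), hb, hlam, div_pos (by norm_num : (0:ℝ) < 2) hb]
end
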